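/- Let R be a commutative ring and let i : P → Q be a chain map of acyclic ℕ-indexed chain complexes of R-modules such that for every n the map i_n : P_n → Q_n is injective, and such that all the modules P_n, Q_n and all the cokernels coker(i_n) are projective R-modules. Then there exists a chain map s : Q → P with s ∘ i = id_P. -/

import Mathlib

/-!
An acyclic ℕ-indexed chain complex `P` of projectives is contractible: a contracting homotopy
`h` with `d h + h d = 𝟙` is built degree by degree, lifting `𝟙 - d h` through the next
differential by exactness and projectivity. Projectivity of the cokernels gives degreewise
retractions `r` of `i`, which need not commute with the differentials; the corrected map
`s = d (h r) + (h r) d` is null-homotopic, hence a chain map, and `i ≫ s = d h + h d = 𝟙`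
since `i` commutes with `d` and `r` retracts `i`.
-/

open CategoryTheory CategoryTheory.Limits

noncomputable section

universe u

theorem LinearMap.exists_leftInverse_of_injective_of_projective_quotient {R M N : Type*} [Ring R]
    [AddCommGroup M] [AddCommGroup N] [Module R M] [Module R N] (f : M →ₗ[R] N)
    (hf : Function.Injective f) [Module.Projective R (N ⧸ LinearMap.range f)] :
    ∃ r : N →ₗ[R] M, r ∘ₗ f = LinearMap.id := by
  obtain ⟨l, hl⟩ := Module.projective_lifting_property (LinearMap.range f).mkQ LinearMap.id
    (Submodule.mkQ_surjective _)
  have hex := LinearMap.exact_map_mkQ_range f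
  exact ⟨_, ((hex.splitInjectiveEquiv (Submodule.mkQ_surjective _)).symm
    (hex.splitSurjectiveEquiv hf ⟨l, hl⟩)).2⟩

theorem HomologicalComplex.ExactAt.exists_lift {C ι : Type*} [Category C] [Abelian C]
    {c : ComplexShape ι} {K : HomologicalComplex C c} {i j k : ι} (hK : K.ExactAt j)
    (hi : c.prev j = i) (hk : c.next j = k) {A : C} [Projective A] (φ : A ⟶ K.X j)
    (hφ : φ ≫ K.d j k = 0) : ∃ ψ : A ⟶ K.X i, ψ ≫ K.d i j = φ :=
  have hS := (K.exactAt_iff' i j k hi hk).1 hK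
  ⟨hS.liftFromProjective φ hφ, hS.liftFromProjective_comp φ hφ⟩

theorem Homotopy.nullHomotopicMap_hom {C ι : Type*} [Category C] [Preadditive C]
    {c : ComplexShape ι} {K L : HomologicalComplex C c} {f g : K ⟶ L} (H : Homotopy f g) :
    Homotopy.nullHomotopicMap H.hom = f - g := by
  ext n
  simp [Homotopy.nullHomotopicMap, H.comm n]

theorem HomologicalComplex.exists_retraction_of_homotopy_id_zero {C ι : Type*} [Category C]
    [Preadditive C] {c : ComplexShape ι} {P Q : HomologicalComplex C c} (H : Homotopy (𝟙 P) 0)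
    (i : P ⟶ Q) (r : ∀ n, Q.X n ⟶ P.X n) (hr : ∀ n, i.f n ≫ r n = 𝟙 _) :
    ∃ s : Q ⟶ P, i ≫ s = 𝟙 P := by
  refine ⟨Homotopy.nullHomotopicMap fun a b => r a ≫ H.hom a b, ?_⟩
  simp [Homotopy.comp_nullHomotopicMap, reassoc_of% hr, H.nullHomotopicMap_hom]

namespace ChainComplex

variable {C : Type*} [Category C] [Abelian C] (P : ChainComplex C ℕ)

-- `ha` holds as soon as `a ≫ d = 𝟙 - d ≫ a'` for some `a'`, i.e. for the previous component of
-- a contracting homotopy.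
theorem exists_contraction_step (j : ℕ) (hP : P.ExactAt (j + 1)) [Projective (P.X (j + 1))]
    (a : P.X j ⟶ P.X (j + 1)) (ha : P.d (j + 1) j ≫ a ≫ P.d (j + 1) j = P.d (j + 1) j) :
    ∃ b : P.X (j + 1) ⟶ P.X (j + 2), 𝟙 _ = P.d (j + 1) j ≫ a + b ≫ P.d (j + 2) (j + 1) := by
  obtain ⟨b, hb⟩ := hP.exists_lift (i := j + 2) (k := j) (by simp) (by simp)
    (𝟙 _ - P.d (j + 1) j ≫ a) (by simp [ha])
  exact ⟨b, by rw [hb]; abel⟩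

variable [∀ n, Projective (P.X n)]

def homotopyIdZeroOfExactAt (hP : ∀ n, P.ExactAt n) : Homotopy (𝟙 P) 0 :=
  have zero := (hP 0).exists_lift (i := 1) (k := 0) (by simp) (by simp) (𝟙 _) (by simp)
  have one := P.exists_contraction_step 0 (hP 1) zero.choose (by simp [zero.choose_spec])
  Homotopy.mkInductive (𝟙 P) zero.choose zero.choose_spec.symm one.choose one.choose_spec
    fun n ⟨f, f', hf⟩ =>
      have next := P.exists_contraction_step (n + 1) (hP (n + 2)) f' <| by
        rw [eq_sub_of_add_eq' hf.symm]
        simp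
      ⟨next.choose, next.choose_spec⟩

end ChainComplex

theorem exists_retraction_of_acyclic (R : Type u) [CommRing R]
    (P Q : ChainComplex (ModuleCat.{u} R) ℕ) (i : P ⟶ Q)
    (hP : ∀ n, P.ExactAt n)
    (hinj : ∀ n, Function.Injective (i.f n))
    (hPproj : ∀ n, Module.Projective R (P.X n))
    (hcoker : ∀ n, Module.Projective R (Q.X n ⧸ LinearMap.range (i.f n).hom)) :
    ∃ s : Q ⟶ P, i ≫ s = 𝟙 P := by
  choose r hr using fun n =>
    (i.f n).hom.exists_leftInverse_of_injective_of_projective_quotient (hinj n)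
  exact HomologicalComplex.exists_retraction_of_homotopy_id_zero
    (P.homotopyIdZeroOfExactAt hP) i (fun n => ModuleCat.ofHom (r n))
    fun n => ModuleCat.hom_ext (hr n)

end
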